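/- Let X be a complex Banach space, n,d ∈ ℕ with 1 ≤ d ≤ n, and p ∈ [1,∞]. Then for every function f : {-1,1}^n → X of degree at most d and every t ≥ 0, ‖e^{-tΔ} f‖_{L_p({-1,1}^n;X)} ≥ (1 / T_d(e^t)) · ‖f‖_{L_p({-1,1}^n;X)}. -/
import Mathlib


open scoped BigOperators ENNReal NNReal

noncomputable section

namespace HammingCube

variable {X : Type*} [NormedAddCommGroup X] [NormedSpace ℂ X]

/-- The sign ±1 associated to a boolean coordinate. -/
def sgn (b : Bool) : ℝ := if b then 1 else -1

/-- The Walsh function `w_A(ε) = ∏_{i ∈ A} ε_i`. -/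
def walsh {n : ℕ} (A : Finset (Fin n)) (ε : Fin n → Bool) : ℝ := ∏ i ∈ A, sgn (ε i)

/-- The Fourier–Walsh coefficient `f̂(A) = 2⁻ⁿ ∑_δ f(δ) w_A(δ)`. -/
def coeff {n : ℕ} (f : (Fin n → Bool) → X) (A : Finset (Fin n)) : X :=
  (2 ^ n : ℝ)⁻¹ • ∑ δ : Fin n → Bool, walsh A δ • f δ

/-- `f` has degree at most `d`: `f̂(A) = 0` whenever `|A| > d`. -/
def degLE {n : ℕ} (f : (Fin n → Bool) → X) (d : ℕ) : Prop :=
  ∀ A : Finset (Fin n), d < A.card → coeff f A = 0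

/-- `f` belongs to the `d`-th tail space: `f̂(A) = 0` whenever `|A| < d`. -/
def tailSpace {n : ℕ} (f : (Fin n → Bool) → X) (d : ℕ) : Prop :=
  ∀ A : Finset (Fin n), A.card < d → coeff f A = 0

/-- The heat semigroup `e^{-tΔ} f = ∑_A e^{-t|A|} f̂(A) w_A`. -/
def heat {n : ℕ} (t : ℝ) (f : (Fin n → Bool) → X) : (Fin n → Bool) → X :=
  fun ε => ∑ A : Finset (Fin n), Real.exp (-t * A.card) • walsh A ε • coeff f A

/-- The hypercube Laplacian `Δ f = ∑_A |A| f̂(A) w_A`. -/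
def lap {n : ℕ} (f : (Fin n → Bool) → X) : (Fin n → Bool) → X :=
  fun ε => ∑ A : Finset (Fin n), (A.card : ℝ) • walsh A ε • coeff f A

/-- The fractional Laplacian `Δ^γ f = ∑_A |A|^γ f̂(A) w_A`. -/
def fracLap {n : ℕ} (γ : ℝ) (f : (Fin n → Bool) → X) : (Fin n → Bool) → X :=
  fun ε => ∑ A : Finset (Fin n), ((A.card : ℝ) ^ γ) • walsh A ε • coeff f A

/-- The `i`-th discrete partial derivative. -/
def pderiv {n : ℕ} (i : Fin n) (f : (Fin n → Bool) → X) : (Fin n → Bool) → X :=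
  fun ε => (2 : ℝ)⁻¹ • (f ε - f (Function.update ε i (!(ε i))))

/-- The vector-valued `L_p` norm `(2⁻ⁿ ∑_ε ‖f(ε)‖^p)^{1/p}` for finite `p`. -/
def lpNorm {n : ℕ} {Y : Type*} [NormedAddCommGroup Y] (p : ℝ)
    (f : (Fin n → Bool) → Y) : ℝ :=
  ((2 ^ n : ℝ)⁻¹ * ∑ ε : Fin n → Bool, ‖f ε‖ ^ p) ^ (1 / p)

/-- The `L_∞` norm `max_ε ‖f(ε)‖`. -/
def linfNorm {n : ℕ} {Y : Type*} [NormedAddCommGroup Y]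
    (f : (Fin n → Bool) → Y) : ℝ :=
  ⨆ ε : Fin n → Bool, ‖f ε‖

/-- The `L_p` norm for `p ∈ [1,∞]` encoded as `p : ℝ≥0∞`. -/
def lpNormE {n : ℕ} {Y : Type*} [NormedAddCommGroup Y] (p : ℝ≥0∞)
    (f : (Fin n → Bool) → Y) : ℝ :=
  if p = ⊤ then linfNorm f else lpNorm p.toReal f

/-- The scalar `L_p` norm of the gradient `‖(∑_i |∂_i f|²)^{1/2}‖_{L_p}`. -/
def gradLpNorm {n : ℕ} (p : ℝ) (f : (Fin n → Bool) → ℂ) : ℝ :=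
  lpNorm p (fun ε => Real.sqrt (∑ i : Fin n, ‖pderiv i f ε‖ ^ 2))

/-- The Rademacher projection `Rad f(ε) = ∑_i f̂({i}) ε_i`. -/
def Rad {n : ℕ} (f : (Fin n → Bool) → X) : (Fin n → Bool) → X :=
  fun ε => ∑ i : Fin n, sgn (ε i) • coeff f {i}

/-- A complex Banach space is `K`-convex if the Rademacher projections are uniformly
bounded on `L_q` for some `q ∈ (1,∞)`. -/
def KConvex (X : Type*) [NormedAddCommGroup X] [NormedSpace ℂ X] : Prop :=
  ∃ q : ℝ, 1 < q ∧ ∃ M : ℝ, ∀ (n : ℕ) (f : (Fin n → Bool) → X),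
    lpNorm q (Rad f) ≤ M * lpNorm q f

/-- `X` has cotype `q` with constant `C`. -/
def HasCotype (X : Type*) [NormedAddCommGroup X] [NormedSpace ℂ X] (q C : ℝ) : Prop :=
  ∀ (n : ℕ) (x : Fin n → X),
    C⁻¹ * (∑ i : Fin n, ‖x i‖ ^ q) ^ (1 / q) ≤
      ((2 ^ n : ℝ)⁻¹ * ∑ ε : Fin n → Bool, ‖∑ i : Fin n, sgn (ε i) • x i‖ ^ q) ^ (1 / q)

/-- The entropy `Ent(h)` of a nonnegative function on the cube. -/
def entropy {n : ℕ} (h : (Fin n → Bool) → ℝ) : ℝ :=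
  (2 ^ n : ℝ)⁻¹ * ∑ ε : Fin n → Bool, h ε * Real.log (h ε) -
    ((2 ^ n : ℝ)⁻¹ * ∑ ε : Fin n → Bool, h ε) *
      Real.log ((2 ^ n : ℝ)⁻¹ * ∑ ε : Fin n → Bool, h ε)

/-- The `L_∞` norm of the gradient `max_ε (∑_i |∂_i f(ε)|²)^{1/2}`. -/
def gradLinfNorm {n : ℕ} (f : (Fin n → Bool) → ℂ) : ℝ :=
  ⨆ ε : Fin n → Bool, Real.sqrt (∑ i : Fin n, ‖pderiv i f ε‖ ^ 2)



-- ===================== auxiliary development =====================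

open Polynomial in
lemma T_degree_le (m : ℕ) : (Polynomial.Chebyshev.T ℝ (m : ℤ)).degree ≤ (m : ℕ) := by
  induction m using Nat.strong_induction_on with
  | _ m ih =>
    match m with
    | 0 => simpa [Polynomial.Chebyshev.T_zero] using Polynomial.degree_one_le
    | 1 => simp [Polynomial.Chebyshev.T_one, Polynomial.degree_X_le]
    | (k+2) =>
      have hcast : ((k + 2 : ℕ) : ℤ) = (k : ℤ) + 2 := by push_cast; ring
      rw [hcast, Polynomial.Chebyshev.T_add_two]
      refine le_trans (Polynomial.degree_sub_le _ _) ?_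
      rw [sup_le_iff]
      constructor
      · refine le_trans (Polynomial.degree_mul_le _ _) ?_
        have h1 : ((k + 1 : ℕ) : ℤ) = (k : ℤ) + 1 := by push_cast; ring
        have h2 := ih (k + 1) (by omega)
        rw [h1] at h2
        have h3 : (2 * Polynomial.X : ℝ[X]).degree ≤ 1 := by
          refine le_trans (Polynomial.degree_mul_le _ _) ?_
          have h4 : ((2 : ℝ[X])).degree ≤ 0 := by
            have : (2 : ℝ[X]) = Polynomial.C (2:ℝ) := rfl
            rw [this]; exact Polynomial.degree_C_le
          calc (2 : ℝ[X]).degree + Polynomial.X.degree ≤ 0 + 1 :=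
                add_le_add h4 Polynomial.degree_X_le
            _ = 1 := by norm_num
        calc (2 * Polynomial.X : ℝ[X]).degree + (Polynomial.Chebyshev.T ℝ ((k:ℤ)+1)).degree
              ≤ 1 + ((k+1 : ℕ) : WithBot ℕ) := add_le_add h3 h2
          _ ≤ ((k + 2 : ℕ) : WithBot ℕ) := by norm_cast; omega
      · refine le_trans (ih k (by omega)) ?_
        exact_mod_cast Nat.le_add_right k 2

section Nodes
open Polynomial
variable {d : ℕ}

def node (d : ℕ) (j : Fin (d + 1)) : ℝ := Real.cos (j * Real.pi / d)

lemma angle_mem (hd : 1 ≤ d) (j : Fin (d + 1)) :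
    (j : ℝ) * Real.pi / d ∈ Set.Icc 0 Real.pi := by
  have hd0 : (0:ℝ) < d := by exact_mod_cast hd
  have hj : (j : ℝ) ≤ d := by exact_mod_cast Fin.is_le j
  constructor
  · positivity
  · rw [div_le_iff₀ hd0]
    have := Real.pi_pos
    nlinarith [Fin.is_le j, this]

lemma node_strictAnti (hd : 1 ≤ d) : StrictAnti (node d) := by
  intro j k hjk
  have h1 := angle_mem hd j
  have h2 := angle_mem hd k
  have hd0 : (0:ℝ) < d := by exact_mod_cast hd
  have hlt : (j : ℝ) * Real.pi / d < (k : ℝ) * Real.pi / d := by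
    have hjk' : (j : ℝ) < k := by exact_mod_cast hjk
    have hpi := Real.pi_pos
    gcongr
  exact Real.strictAntiOn_cos h1 h2 hlt

lemma node_injOn (hd : 1 ≤ d) : Set.InjOn (node d) ↑(Finset.univ : Finset (Fin (d+1))) :=
  fun j _ k _ h => ((node_strictAnti hd).injective h)

lemma node_le_one (j : Fin (d+1)) : node d j ≤ 1 := Real.cos_le_one _
lemma abs_node_le_one (j : Fin (d+1)) : |node d j| ≤ 1 := Real.abs_cos_le_one _

lemma lagrange_reproduce (hd : 1 ≤ d) {q : ℝ[X]} (hq : q.degree < ((d+1 : ℕ) : WithBot ℕ)) (y : ℝ) :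
    ∑ j : Fin (d+1), q.eval (node d j) * (Lagrange.basis Finset.univ (node d) j).eval y
      = q.eval y := by
  have hcard : ((Finset.univ : Finset (Fin (d+1))).card) = (d+1 : ℕ) := by simp
  have h := Lagrange.eq_interpolate (f := q) (node_injOn hd) (by rw [hcard]; exact hq)
  conv_rhs => rw [h]
  rw [Lagrange.interpolate_apply, Polynomial.eval_finset_sum]
  exact Finset.sum_congr rfl fun j _ => by rw [Polynomial.eval_mul, Polynomial.eval_C]

lemma eval_lagrange_basis (j : Fin (d+1)) (y : ℝ) :
    (Lagrange.basis Finset.univ (node d) j).eval y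
      = ∏ k ∈ Finset.univ.erase j, ((node d j - node d k)⁻¹ * (y - node d k)) := by
  rw [Lagrange.basis, Polynomial.eval_prod]
  exact Finset.prod_congr rfl fun k _ => by simp [Lagrange.basisDivisor]

lemma sign_basis (hd : 1 ≤ d) (j : Fin (d+1)) {y : ℝ} (hy : 1 ≤ y) :
    0 ≤ (-1:ℝ)^(j:ℕ) * (Lagrange.basis Finset.univ (node d) j).eval y := by
  rw [eval_lagrange_basis]
  have hsplit : Finset.univ.erase j = Finset.Iio j ∪ Finset.Ioi j := by
    ext k
    simp only [Finset.mem_erase, Finset.mem_univ, and_true, Finset.mem_union,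
      Finset.mem_Iio, Finset.mem_Ioi]
    exact ne_iff_lt_or_gt
  have hdisj : Disjoint (Finset.Iio j) (Finset.Ioi j) := by
    rw [Finset.disjoint_left]
    intro k h1 h2
    rw [Finset.mem_Iio] at h1
    rw [Finset.mem_Ioi] at h2
    exact absurd h1 (not_lt_of_gt h2)
  rw [hsplit, Finset.prod_union hdisj, ← mul_assoc]
  have hIio : ∏ k ∈ Finset.Iio j, ((node d j - node d k)⁻¹ * (y - node d k))
      = (-1:ℝ)^(j:ℕ) * ∏ k ∈ Finset.Iio j, ((node d k - node d j)⁻¹ * (y - node d k)) := by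
    have hfac : ∀ k ∈ Finset.Iio j, ((node d j - node d k)⁻¹ * (y - node d k))
        = (-1) * ((node d k - node d j)⁻¹ * (y - node d k)) := by
      intro k _
      rw [show node d j - node d k = -(node d k - node d j) by ring, inv_neg]
      ring
    rw [Finset.prod_congr rfl hfac, Finset.prod_mul_distrib, Finset.prod_const, Fin.card_Iio]
  rw [hIio, ← mul_assoc, ← pow_add]
  have heven : (-1:ℝ) ^ ((j:ℕ) + (j:ℕ)) = 1 := Even.neg_one_pow ⟨(j:ℕ), rfl⟩
  rw [heven, one_mul]
  apply mul_nonneg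
  · apply Finset.prod_nonneg
    intro k hk
    rw [Finset.mem_Iio] at hk
    have h1 : node d j ≤ node d k := (node_strictAnti hd hk).le
    have h2 : node d k ≤ 1 := node_le_one k
    apply mul_nonneg (inv_nonneg.mpr (by linarith)) (by linarith)
  · apply Finset.prod_nonneg
    intro k hk
    rw [Finset.mem_Ioi] at hk
    have h1 : node d k ≤ node d j := (node_strictAnti hd hk).le
    have h2 : node d k ≤ 1 := node_le_one k
    apply mul_nonneg (inv_nonneg.mpr (by linarith)) (by linarith)

lemma T_eval_node (hd : 1 ≤ d) (j : Fin (d+1)) :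
    (Polynomial.Chebyshev.T ℝ (d:ℤ)).eval (node d j) = (-1:ℝ)^(j:ℕ) := by
  unfold node
  rw [Polynomial.Chebyshev.T_real_cos]
  have hd0 : (d:ℝ) ≠ 0 := by
    have : (0:ℝ) < d := by exact_mod_cast hd
    linarith
  have harg : ((d:ℤ):ℝ) * ((j:ℝ) * Real.pi / d) = (j:ℝ) * Real.pi := by
    push_cast
    field_simp
  rw [harg]
  have h := Real.cos_nat_mul_pi_sub 0 (j:ℕ)
  simpa using h

end Nodes

variable {n : ℕ}

lemma sum_boolfun_prod (h : Fin n → Bool → ℝ) :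
    ∑ δ : Fin n → Bool, ∏ i : Fin n, h i (δ i) = ∏ i : Fin n, ∑ b : Bool, h i b :=
  (Fintype.prod_sum h).symm

/-- The generalized noise operator. -/
def noise (ρ : ℝ) (f : (Fin n → Bool) → X) : (Fin n → Bool) → X :=
  fun ε => ∑ A : Finset (Fin n), ρ ^ A.card • walsh A ε • coeff f A

lemma heat_eq_noise (t : ℝ) (f : (Fin n → Bool) → X) :
    heat t f = noise (Real.exp (-t)) f := by
  funext ε
  refine Finset.sum_congr rfl fun A _ => ?_
  rw [show -t * (A.card : ℝ) = (A.card : ℝ) * (-t) by ring, Real.exp_nat_mul]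

lemma sgn_beq (a b : Bool) : sgn a * sgn (a == b) = sgn b := by
  cases a <;> cases b <;> norm_num [sgn]

lemma sum_walsh_mul (ρ : ℝ) (ε δ : Fin n → Bool) :
    ∑ A : Finset (Fin n), ρ ^ A.card * (walsh A ε * walsh A δ)
      = ∏ i : Fin n, (1 + ρ * (sgn (ε i) * sgn (δ i))) := by
  have h := Fintype.prod_add (fun i : Fin n => ρ * (sgn (ε i) * sgn (δ i))) (fun _ => (1 : ℝ))
  have h2 : ∏ i : Fin n, (1 + ρ * (sgn (ε i) * sgn (δ i)))
      = ∏ i : Fin n, (ρ * (sgn (ε i) * sgn (δ i)) + 1) :=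
    Finset.prod_congr rfl fun i _ => by ring
  rw [h2, h]
  refine (Finset.sum_congr rfl fun A _ => ?_).symm
  rw [Finset.prod_const_one, mul_one, Finset.prod_mul_distrib, Finset.prod_const,
    Finset.prod_mul_distrib]
  unfold walsh; ring

lemma noise_kernel (ρ : ℝ) (f : (Fin n → Bool) → X) (ε : Fin n → Bool) :
    noise ρ f ε = ∑ δ : Fin n → Bool,
      ((2 ^ n : ℝ)⁻¹ * ∏ i : Fin n, (1 + ρ * (sgn (ε i) * sgn (δ i)))) • f δ := by
  unfold noise coeff
  have step : ∀ A : Finset (Fin n),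
      ρ ^ A.card • walsh A ε • ((2 ^ n : ℝ)⁻¹ • ∑ δ : Fin n → Bool, walsh A δ • f δ)
        = ∑ δ : Fin n → Bool, ((2 ^ n : ℝ)⁻¹ * (ρ ^ A.card * (walsh A ε * walsh A δ))) • f δ := by
    intro A
    rw [Finset.smul_sum, Finset.smul_sum, Finset.smul_sum]
    exact Finset.sum_congr rfl fun δ _ => by rw [smul_smul, smul_smul, smul_smul]; ring_nf
  simp_rw [step]
  rw [Finset.sum_comm]
  refine Finset.sum_congr rfl fun δ _ => ?_
  rw [← Finset.sum_smul, ← Finset.mul_sum, sum_walsh_mul]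

lemma noise_avg (ρ : ℝ) (f : (Fin n → Bool) → X) (ε : Fin n → Bool) :
    noise ρ f ε = ∑ σ : Fin n → Bool,
      ((2 ^ n : ℝ)⁻¹ * ∏ i : Fin n, (1 + ρ * sgn (σ i))) • f (fun i => ε i == σ i) := by
  rw [noise_kernel]
  have hinv : Function.Involutive (fun σ : Fin n → Bool => (fun i => ε i == σ i)) := by
    intro σ; funext i
    have : ∀ a b : Bool, (a == (a == b)) = b := by decide
    exact this (ε i) (σ i)
  set e := Function.Involutive.toPerm _ hinv with he
  have hcomp := Equiv.sum_comp e
    (fun δ => ((2 ^ n : ℝ)⁻¹ * ∏ i : Fin n, (1 + ρ * (sgn (ε i) * sgn (δ i)))) • f δ)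
  rw [← hcomp]
  refine Finset.sum_congr rfl fun σ _ => ?_
  have hperm : (e σ : Fin n → Bool) = fun i => ε i == σ i := rfl
  rw [hperm]
  congr 2
  exact Finset.prod_congr rfl fun i _ => by rw [sgn_beq]

lemma weight_nonneg {ρ : ℝ} (hρ : |ρ| ≤ 1) (σ : Fin n → Bool) :
    0 ≤ (2 ^ n : ℝ)⁻¹ * ∏ i : Fin n, (1 + ρ * sgn (σ i)) := by
  apply mul_nonneg (by positivity)
  apply Finset.prod_nonneg
  intro i _
  have h1 : |ρ * sgn (σ i)| ≤ 1 := by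
    rw [abs_mul]
    have h2 : |sgn (σ i)| = 1 := by cases σ i <;> norm_num [sgn]
    rw [h2, mul_one]; exact hρ
  nlinarith [abs_le.mp h1]

lemma weight_sum (ρ : ℝ) :
    ∑ σ : Fin n → Bool, ((2 ^ n : ℝ)⁻¹ * ∏ i : Fin n, (1 + ρ * sgn (σ i))) = 1 := by
  rw [← Finset.mul_sum, sum_boolfun_prod (fun i b => 1 + ρ * sgn b)]
  have h : ∀ i : Fin n, ∑ b : Bool, (1 + ρ * sgn b) = 2 := by
    intro i; rw [Fintype.sum_bool]; simp [sgn]; ring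
  rw [Finset.prod_congr rfl fun i _ => h i, Finset.prod_const]
  simp

lemma walsh_ortho (A B : Finset (Fin n)) :
    ∑ δ : Fin n → Bool, walsh A δ * walsh B δ = if A = B then (2 ^ n : ℝ) else 0 := by
  have hw : ∀ δ : Fin n → Bool, walsh A δ * walsh B δ
      = ∏ i : Fin n, ((if i ∈ A then sgn (δ i) else 1) * (if i ∈ B then sgn (δ i) else 1)) := by
    intro δ
    rw [Finset.prod_mul_distrib, Finset.prod_ite_mem, Finset.prod_ite_mem,
      Finset.univ_inter, Finset.univ_inter]
    rfl
  rw [Finset.sum_congr rfl fun δ _ => hw δ,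
    sum_boolfun_prod (fun i b => (if i ∈ A then sgn b else 1) * (if i ∈ B then sgn b else 1))]
  by_cases hAB : A = B
  · subst hAB
    rw [if_pos rfl]
    have h : ∀ i : Fin n,
        ∑ b : Bool, ((if i ∈ A then sgn b else 1) * (if i ∈ A then sgn b else 1)) = 2 := by
      intro i; by_cases hi : i ∈ A <;> simp [hi, Fintype.sum_bool, sgn] <;> norm_num
    rw [Finset.prod_congr rfl fun i _ => h i, Finset.prod_const]
    simp
  · rw [if_neg hAB]
    have hex : ∃ i : Fin n, ¬ ((i ∈ A) ↔ (i ∈ B)) := by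
      by_contra h
      push_neg at h
      exact hAB (Finset.ext fun i => (h i))
    obtain ⟨i, hi⟩ := hex
    apply Finset.prod_eq_zero (Finset.mem_univ i)
    rcases Decidable.em (i ∈ A) with hA | hA <;> rcases Decidable.em (i ∈ B) with hB | hB
    · exact absurd ⟨fun _ => hB, fun _ => hA⟩ hi
    · simp [hA, hB, Fintype.sum_bool, sgn]
    · simp [hA, hB, Fintype.sum_bool, sgn]
    · exact absurd ⟨fun h => absurd h hA, fun h => absurd h hB⟩ hi

lemma coeff_noise (ρ : ℝ) (f : (Fin n → Bool) → X) (A : Finset (Fin n)) :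
    coeff (noise ρ f) A = ρ ^ A.card • coeff f A := by
  have h0 : coeff (noise ρ f) A
      = (2 ^ n : ℝ)⁻¹ • ∑ δ : Fin n → Bool, walsh A δ • noise ρ f δ := rfl
  rw [h0]
  have step : ∀ δ : Fin n → Bool,
      walsh A δ • noise ρ f δ
        = ∑ B : Finset (Fin n), (ρ ^ B.card * (walsh A δ * walsh B δ)) • coeff f B := by
    intro δ
    unfold noise
    rw [Finset.smul_sum]
    exact Finset.sum_congr rfl fun B _ => by rw [smul_smul, smul_smul]; ring_nf
  rw [Finset.sum_congr rfl fun δ _ => step δ, Finset.sum_comm]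
  have h1 : ∀ B : Finset (Fin n),
      (∑ δ : Fin n → Bool, (ρ ^ B.card * (walsh A δ * walsh B δ)) • coeff f B)
        = (ρ ^ B.card * ∑ δ : Fin n → Bool, walsh A δ * walsh B δ) • coeff f B := by
    intro B
    rw [← Finset.sum_smul, ← Finset.mul_sum]
  rw [Finset.sum_congr rfl fun B _ => h1 B]
  rw [Finset.sum_congr rfl fun B _ => by rw [walsh_ortho]]
  rw [Finset.sum_eq_single A]
  · rw [if_pos rfl, smul_smul]
    congr 1
    have h2 : (2 : ℝ) ^ n ≠ 0 := by positivity
    field_simp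
  · intro B _ hB
    rw [if_neg (fun h => hB h.symm), mul_zero, zero_smul]
  · intro h; exact absurd (Finset.mem_univ A) h

lemma noise_one (f : (Fin n → Bool) → X) : noise 1 f = f := by
  funext ε
  rw [noise_avg]
  rw [Finset.sum_eq_single (fun _ => true)]
  · have h : (∏ i : Fin n, (1 + (1:ℝ) * sgn true)) = 2 ^ n := by
      norm_num [sgn]
    simp only [h]
    have h2 : ((2 ^ n : ℝ)⁻¹ * 2 ^ n) = 1 := by
      have : (2:ℝ) ^ n ≠ 0 := by positivity
      field_simp
    rw [h2, one_smul]
    congr 1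
    funext i
    cases ε i <;> rfl
  · intro σ _ hσ
    have hex : ∃ i, σ i = false := by
      by_contra h
      push_neg at h
      exact hσ (funext fun i => by have := h i; simp at this ⊢; exact this)
    obtain ⟨i, hi⟩ := hex
    have : (∏ j : Fin n, (1 + (1:ℝ) * sgn (σ j))) = 0 := by
      apply Finset.prod_eq_zero (Finset.mem_univ i)
      rw [hi]; norm_num [sgn]
    rw [this, mul_zero, zero_smul]
  · intro h; exact absurd (Finset.mem_univ _) h

lemma noise_noise (ρ₁ ρ₂ : ℝ) (f : (Fin n → Bool) → X) :
    noise ρ₁ (noise ρ₂ f) = noise (ρ₁ * ρ₂) f := by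
  funext ε
  have h0 : noise ρ₁ (noise ρ₂ f) ε
      = ∑ A : Finset (Fin n), ρ₁ ^ A.card • walsh A ε • coeff (noise ρ₂ f) A := rfl
  have h1 : noise (ρ₁ * ρ₂) f ε
      = ∑ A : Finset (Fin n), (ρ₁ * ρ₂) ^ A.card • walsh A ε • coeff f A := rfl
  rw [h0, h1]
  refine Finset.sum_congr rfl fun A _ => ?_
  rw [coeff_noise, smul_smul, smul_smul, smul_smul]
  congr 1
  rw [mul_pow]
  ring



section NormLemmas

variable {Y : Type*} [NormedAddCommGroup Y] {p : ℝ≥0∞}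

lemma toReal_one_le (hp : 1 ≤ p) (hptop : p ≠ ⊤) : 1 ≤ p.toReal := by
  have := ENNReal.toReal_mono hptop hp
  simpa using this

lemma lpNormE_eq_pilp (hp : 1 ≤ p) (f : (Fin n → Bool) → Y) :
    haveI : Fact (1 ≤ p) := ⟨hp⟩
    lpNormE p f = ((2 ^ n : ℝ)⁻¹) ^ (1 / p.toReal)
      * ‖(WithLp.equiv p ((Fin n → Bool) → Y)).symm f‖ := by
  haveI : Fact (1 ≤ p) := ⟨hp⟩
  by_cases hptop : p = ⊤
  · subst hptop
    rw [lpNormE, if_pos rfl]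
    have h1 : (1 / (⊤ : ℝ≥0∞).toReal) = 0 := by simp
    rw [h1, Real.rpow_zero, one_mul, linfNorm, PiLp.norm_eq_ciSup]
    rfl
  · rw [lpNormE, if_neg hptop, lpNorm]
    have hpt : 0 < p.toReal := lt_of_lt_of_le one_pos (toReal_one_le hp hptop)
    rw [PiLp.norm_eq_sum hpt]
    have hnn : (0:ℝ) ≤ (2 ^ n : ℝ)⁻¹ := by positivity
    have hsum : (0:ℝ) ≤ ∑ ε : Fin n → Bool, ‖f ε‖ ^ p.toReal :=
      Finset.sum_nonneg fun ε _ => Real.rpow_nonneg (norm_nonneg _) _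
    rw [Real.mul_rpow hnn hsum]
    rfl

lemma lpNormE_nonneg (hp : 1 ≤ p) (f : (Fin n → Bool) → Y) : 0 ≤ lpNormE p f := by
  haveI : Fact (1 ≤ p) := ⟨hp⟩
  rw [lpNormE_eq_pilp hp]
  exact mul_nonneg (Real.rpow_nonneg (by positivity) _) (norm_nonneg _)

lemma lpNormE_sum_smul_le {X : Type*} [NormedAddCommGroup X] [NormedSpace ℂ X]
    (hp : 1 ≤ p) {ι : Type*} (s : Finset ι) (c : ι → ℝ) (g : ι → (Fin n → Bool) → X) :
    lpNormE p (fun ε => ∑ j ∈ s, c j • g j ε) ≤ ∑ j ∈ s, |c j| * lpNormE p (g j) := by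
  haveI : Fact (1 ≤ p) := ⟨hp⟩
  rw [lpNormE_eq_pilp hp]
  have key : (WithLp.equiv p ((Fin n → Bool) → X)).symm (fun ε => ∑ j ∈ s, c j • g j ε)
      = ∑ j ∈ s, c j • (WithLp.equiv p ((Fin n → Bool) → X)).symm (g j) := by
    have : (fun ε => ∑ j ∈ s, c j • g j ε) = ∑ j ∈ s, c j • g j := by
      funext ε
      simp [Finset.sum_apply, Pi.smul_apply]
    rw [this]
    have := map_sum ((WithLp.linearEquiv p ℝ ((Fin n → Bool) → X)).symm)
      (fun j => c j • g j) s
    simp only [map_smul] at this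
    exact this
  rw [key]
  calc ((2 ^ n : ℝ)⁻¹) ^ (1 / p.toReal)
        * ‖∑ j ∈ s, c j • (WithLp.equiv p ((Fin n → Bool) → X)).symm (g j)‖
      ≤ ((2 ^ n : ℝ)⁻¹) ^ (1 / p.toReal)
        * ∑ j ∈ s, |c j| * ‖(WithLp.equiv p ((Fin n → Bool) → X)).symm (g j)‖ := by
        apply mul_le_mul_of_nonneg_left _ (Real.rpow_nonneg (by positivity) _)
        refine le_trans (norm_sum_le _ _) ?_
        refine Finset.sum_le_sum fun j _ => ?_
        rw [norm_smul, Real.norm_eq_abs]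
    _ = ∑ j ∈ s, |c j| * lpNormE p (g j) := by
        rw [Finset.mul_sum]
        refine Finset.sum_congr rfl fun j _ => ?_
        rw [lpNormE_eq_pilp hp]
        ring

lemma lpNormE_comp_equiv (hp : 1 ≤ p) (f : (Fin n → Bool) → Y)
    (e : (Fin n → Bool) ≃ (Fin n → Bool)) :
    lpNormE p (fun ε => f (e ε)) = lpNormE p f := by
  rw [lpNormE, lpNormE]
  by_cases hptop : p = ⊤
  · rw [if_pos hptop, if_pos hptop]
    unfold linfNorm
    exact e.surjective.iSup_comp (fun δ => ‖f δ‖)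
  · rw [if_neg hptop, if_neg hptop]
    unfold lpNorm
    congr 2
    exact Equiv.sum_comp e (fun δ => ‖f δ‖ ^ p.toReal)

lemma lpNormE_noise_le {X : Type*} [NormedAddCommGroup X] [NormedSpace ℂ X]
    (hp : 1 ≤ p) {ρ : ℝ} (hρ : |ρ| ≤ 1) (g : (Fin n → Bool) → X) :
    lpNormE p (noise ρ g) ≤ lpNormE p g := by
  have havg : noise ρ g = fun ε => ∑ σ : Fin n → Bool,
      ((2 ^ n : ℝ)⁻¹ * ∏ i : Fin n, (1 + ρ * sgn (σ i))) •
        (fun ε' => g (fun i => ε' i == σ i)) ε := by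
    funext ε; exact noise_avg ρ g ε
  rw [havg]
  refine le_trans (lpNormE_sum_smul_le hp Finset.univ _ _) ?_
  have step : ∀ σ : Fin n → Bool,
      |(2 ^ n : ℝ)⁻¹ * ∏ i : Fin n, (1 + ρ * sgn (σ i))|
        * lpNormE p (fun ε' => g (fun i => ε' i == σ i))
      = ((2 ^ n : ℝ)⁻¹ * ∏ i : Fin n, (1 + ρ * sgn (σ i))) * lpNormE p g := by
    intro σ
    have hinv : Function.Involutive
        (fun ε' : Fin n → Bool => (fun i => ε' i == σ i)) := by
      intro ε'; funext i
      have : ∀ a b : Bool, ((a == b) == b) = a := by decide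
      exact this (ε' i) (σ i)
    rw [abs_of_nonneg (weight_nonneg hρ σ)]
    congr 1
    exact lpNormE_comp_equiv hp g (Function.Involutive.toPerm _ hinv)
  rw [Finset.sum_congr rfl fun σ _ => step σ, ← Finset.sum_mul, weight_sum, one_mul]

end NormLemmas

/-- **Theorem 1 (Eskenazis–Ivanisvili).** Lower bound on the decay of the heat semigroup
for low-degree functions with values in an arbitrary complex Banach space. -/
theorem stmt0 {X : Type*} [NormedAddCommGroup X] [NormedSpace ℂ X] [CompleteSpace X]
    (n d : ℕ) (hd : 1 ≤ d) (hdn : d ≤ n) (p : ℝ≥0∞) (hp : 1 ≤ p)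
    (f : (Fin n → Bool) → X) (hf : degLE f d) (t : ℝ) (ht : 0 ≤ t) :
    ((Polynomial.Chebyshev.T ℝ (d : ℤ)).eval (Real.exp t))⁻¹ * lpNormE p f ≤
      lpNormE p (heat t f) := by
  classical
  have hy : 1 ≤ Real.exp t := Real.one_le_exp ht
  obtain ⟨L, hL⟩ : ∃ L : Fin (d+1) → ℝ,
      L = fun j => (Lagrange.basis Finset.univ (node d) j).eval (Real.exp t) := ⟨_, rfl⟩
  -- monomial reproduction
  have hmono : ∀ k : ℕ, k ≤ d → ∑ j : Fin (d+1), (node d j) ^ k * L j = (Real.exp t) ^ k := by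
    intro k hk
    have hdeg : ((Polynomial.X : Polynomial ℝ) ^ k).degree < ((d+1 : ℕ) : WithBot ℕ) := by
      rw [Polynomial.degree_X_pow]
      exact_mod_cast Nat.lt_succ_of_le hk
    have h := lagrange_reproduce hd hdeg (Real.exp t)
    rw [hL]
    simpa [Polynomial.eval_pow, Polynomial.eval_X] using h
  have hsum1 : ∑ j : Fin (d+1), L j = 1 := by
    have h := hmono 0 (Nat.zero_le d)
    simpa using h
  have hcheb : ∑ j : Fin (d+1), (-1 : ℝ) ^ (j : ℕ) * L j
      = (Polynomial.Chebyshev.T ℝ (d : ℤ)).eval (Real.exp t) := by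
    have hdeg : (Polynomial.Chebyshev.T ℝ (d : ℤ)).degree < ((d+1 : ℕ) : WithBot ℕ) := by
      refine lt_of_le_of_lt (T_degree_le d) ?_
      exact_mod_cast Nat.lt_succ_self d
    have h := lagrange_reproduce hd hdeg (Real.exp t)
    simp_rw [T_eval_node hd] at h
    rw [hL]
    exact h
  have habs : ∀ j : Fin (d+1), |L j| = (-1 : ℝ) ^ (j : ℕ) * L j := by
    intro j
    have h1 : 0 ≤ (-1 : ℝ) ^ (j : ℕ) * L j := by
      rw [hL]; exact sign_basis hd j hy
    have h2 : |L j| = |(-1 : ℝ) ^ (j : ℕ) * L j| := by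
      rw [abs_mul, abs_pow, abs_neg, abs_one, one_pow, one_mul]
    rw [h2, abs_of_nonneg h1]
  have hTsum : ∑ j : Fin (d+1), |L j|
      = (Polynomial.Chebyshev.T ℝ (d : ℤ)).eval (Real.exp t) := by
    rw [Finset.sum_congr rfl fun j _ => habs j, hcheb]
  have hT1 : 1 ≤ (Polynomial.Chebyshev.T ℝ (d : ℤ)).eval (Real.exp t) := by
    calc (1 : ℝ) = |∑ j : Fin (d+1), L j| := by rw [hsum1]; norm_num
      _ ≤ ∑ j : Fin (d+1), |L j| := Finset.abs_sum_le_sum_abs _ _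
      _ = _ := hTsum
  -- key pointwise identity
  have hkey : f = fun ε => ∑ j : Fin (d+1), L j • noise (node d j * Real.exp (-t)) f ε := by
    funext ε
    have hRHS : ∀ j : Fin (d+1), L j • noise (node d j * Real.exp (-t)) f ε
        = ∑ A : Finset (Fin n),
            (L j * (node d j * Real.exp (-t)) ^ A.card) • walsh A ε • coeff f A := by
      intro j
      rw [show noise (node d j * Real.exp (-t)) f ε = ∑ A : Finset (Fin n),
        (node d j * Real.exp (-t)) ^ A.card • walsh A ε • coeff f A from rfl, Finset.smul_sum]
      exact Finset.sum_congr rfl fun A _ => by rw [smul_smul]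
    rw [Finset.sum_congr rfl fun j _ => hRHS j, Finset.sum_comm]
    have hLHS : f ε = ∑ A : Finset (Fin n), walsh A ε • coeff f A := by
      conv_lhs => rw [← noise_one f]
      rw [show noise 1 f ε = ∑ A : Finset (Fin n),
        (1 : ℝ) ^ A.card • walsh A ε • coeff f A from rfl]
      exact Finset.sum_congr rfl fun A _ => by rw [one_pow, one_smul]
    rw [hLHS]
    refine Finset.sum_congr rfl fun A _ => ?_
    by_cases hA : A.card ≤ d
    · have hcoef : ∑ j : Fin (d+1), (L j * (node d j * Real.exp (-t)) ^ A.card) = 1 := by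
        have expand : ∀ j : Fin (d+1), L j * (node d j * Real.exp (-t)) ^ A.card
            = ((node d j) ^ A.card * L j) * (Real.exp (-t)) ^ A.card := by
          intro j; rw [mul_pow]; ring
        rw [Finset.sum_congr rfl fun j _ => expand j, ← Finset.sum_mul, hmono A.card hA,
          ← mul_pow, ← Real.exp_add]
        simp
      rw [← Finset.sum_smul, hcoef, one_smul]
    · push_neg at hA
      rw [hf A hA]
      simp
  -- norm chain
  have hchain : lpNormE p f
      ≤ (Polynomial.Chebyshev.T ℝ (d : ℤ)).eval (Real.exp t) * lpNormE p (heat t f) := by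
    conv_lhs => rw [hkey]
    refine le_trans (lpNormE_sum_smul_le hp Finset.univ L _) ?_
    have hterm : ∀ j : Fin (d+1),
        |L j| * lpNormE p (noise (node d j * Real.exp (-t)) f)
          ≤ |L j| * lpNormE p (heat t f) := by
      intro j
      apply mul_le_mul_of_nonneg_left _ (abs_nonneg _)
      have hcomp : noise (node d j * Real.exp (-t)) f = noise (node d j) (heat t f) := by
        rw [heat_eq_noise, noise_noise]
      rw [hcomp]
      exact lpNormE_noise_le hp (abs_node_le_one j) _
    refine le_trans (Finset.sum_le_sum fun j _ => hterm j) ?_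
    rw [← Finset.sum_mul, hTsum]
  exact (inv_mul_le_iff₀ (lt_of_lt_of_le one_pos hT1)).mpr hchain

end HammingCube
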